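/- arXiv:1501.02619 — 5 statements merged into one kernel-verified Lean document; each statement's English description precedes it below -/
import Mathlib

section
/- In a finite semidistributive lattice, the number of join-irreducible elements equals the number of meet-irreducible elements. -/
open Classical

/-- Existence of the "kappa" element for a sup-irreducible element in a finite
meet-semidistributive lattice. -/
lemma kappa_exists {α : Type*} [Lattice α] [Fintype α]
    (hMSD : ∀ x y z : α, x ⊓ y = x ⊓ z → x ⊓ y = x ⊓ (y ⊔ z))
    {j : α} (hj : SupIrred j) :
    ∃ κ : α, InfIrred κ ∧ ¬ j ≤ κ ∧ (∀ x, κ < x → j ≤ x) ∧ (∀ x, x < j → x ≤ κ) := by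
  classical
  obtain ⟨w, hw⟩ := not_isMin_iff.mp hj.1
  have hSne : (Finset.univ.filter (fun x => x < j)).Nonempty :=
    ⟨w, Finset.mem_filter.mpr ⟨Finset.mem_univ w, hw⟩⟩
  obtain ⟨js, hjslt, hlt_le_js⟩ : ∃ js, js < j ∧ ∀ x, x < j → x ≤ js := by
    refine ⟨(Finset.univ.filter (fun x => x < j)).sup' hSne id, ?_, ?_⟩
    · refine Finset.sup'_induction (p := (· < j)) hSne id ?_
        (fun b hb => (Finset.mem_filter.mp hb).2)
      intro a ha b hb
      rcases (sup_le ha.le hb.le).lt_or_eq with h | h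
      · exact h
      · rcases hj.2 h with rfl | rfl
        exacts [absurd rfl ha.ne, absurd rfl hb.ne]
    · intro x hx
      have hmem : x ∈ Finset.univ.filter (fun y => y < j) :=
        Finset.mem_filter.mpr ⟨Finset.mem_univ x, hx⟩
      exact Finset.le_sup' id hmem
  have hTne : (Finset.univ.filter (fun x => js ≤ x ∧ ¬ j ≤ x)).Nonempty :=
    ⟨js, Finset.mem_filter.mpr ⟨Finset.mem_univ js, le_rfl, fun h => hjslt.not_ge h⟩⟩
  obtain ⟨κ, hκjs, hκnle, hκmax⟩ :
      ∃ κ, js ≤ κ ∧ ¬ j ≤ κ ∧ ∀ x, js ≤ x → ¬ j ≤ x → x ≤ κ := by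
    have hboth : js ≤ (Finset.univ.filter (fun x => js ≤ x ∧ ¬ j ≤ x)).sup' hTne id ∧
        ¬ j ≤ (Finset.univ.filter (fun x => js ≤ x ∧ ¬ j ≤ x)).sup' hTne id := by
      refine Finset.sup'_induction (p := fun a => js ≤ a ∧ ¬ j ≤ a) hTne id ?_
        (fun b hb => (Finset.mem_filter.mp hb).2)
      rintro a ⟨ha1, ha2⟩ b ⟨hb1, hb2⟩
      refine ⟨le_trans ha1 le_sup_left, ?_⟩
      have hja : j ⊓ a = js := by
        have h1 : j ⊓ a < j := lt_of_le_of_ne inf_le_left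
          (fun h => ha2 (h ▸ inf_le_right))
        exact le_antisymm (hlt_le_js _ h1) (le_inf hjslt.le ha1)
      have hjb : j ⊓ b = js := by
        have h1 : j ⊓ b < j := lt_of_le_of_ne inf_le_left
          (fun h => hb2 (h ▸ inf_le_right))
        exact le_antisymm (hlt_le_js _ h1) (le_inf hjslt.le hb1)
      have hm := hMSD j a b (hja.trans hjb.symm)
      intro hle
      rw [hja, inf_eq_left.mpr hle] at hm
      exact absurd hm.symm hjslt.ne'
    refine ⟨_, hboth.1, hboth.2, ?_⟩
    intro x h1 h2
    have hmem : x ∈ Finset.univ.filter (fun y => js ≤ y ∧ ¬ j ≤ y) :=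
      Finset.mem_filter.mpr ⟨Finset.mem_univ x, h1, h2⟩
    exact Finset.le_sup' id hmem
  have hup : ∀ x, κ < x → j ≤ x := by
    intro x hx
    by_contra h
    exact absurd (hκmax x (le_trans hκjs hx.le) h) hx.not_ge
  refine ⟨κ, ⟨?_, ?_⟩, hκnle, hup, fun x hx => le_trans (hlt_le_js x hx) hκjs⟩
  · -- not IsMax
    intro hmax
    exact hκnle (le_trans le_sup_right (hmax le_sup_left : κ ⊔ j ≤ κ))
  · -- inf-irreducible
    intro b c hbc
    by_contra h
    push_neg at h
    have hb : κ < b := lt_of_le_of_ne (hbc ▸ inf_le_left) (Ne.symm h.1)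
    have hc : κ < c := lt_of_le_of_ne (hbc ▸ inf_le_right) (Ne.symm h.2)
    exact hκnle (hbc ▸ le_inf (hup b hb) (hup c hc))

/-- The number of sup-irreducibles is at most the number of inf-irreducibles in a finite
semidistributive lattice. -/
lemma supIrred_card_le {α : Type*} [Lattice α] [Fintype α]
    (hJSD : ∀ x y z : α, x ⊔ y = x ⊔ z → x ⊔ y = x ⊔ (y ⊓ z))
    (hMSD : ∀ x y z : α, x ⊓ y = x ⊓ z → x ⊓ y = x ⊓ (y ⊔ z)) :
    {x : α | SupIrred x}.ncard ≤ {x : α | InfIrred x}.ncard := by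
  classical
  set f : α → α := fun j => if h : SupIrred j then Classical.choose (kappa_exists hMSD h) else j
    with hf
  have hspec : ∀ j (h : SupIrred j), InfIrred (f j) ∧ ¬ j ≤ f j ∧
      (∀ x, f j < x → j ≤ x) ∧ (∀ x, x < j → x ≤ f j) := by
    intro j h
    rw [hf]; simp only [dif_pos h]
    exact Classical.choose_spec (kappa_exists hMSD h)
  refine Set.ncard_le_ncard_of_injOn f (fun j hj => (hspec j hj).1) ?_ (Set.toFinite _)
  intro j1 hj1 j2 hj2 heq
  obtain ⟨_, hn1, hu1, hl1⟩ := hspec j1 hj1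
  obtain ⟨_, hn2, hu2, hl2⟩ := hspec j2 hj2
  rw [← heq] at hn2 hu2 hl2
  set κ := f j1
  -- κ ⊔ j1 = κ ⊔ j2
  have h1 : κ < κ ⊔ j1 := lt_of_le_of_ne le_sup_left (fun h => hn1 (h ▸ le_sup_right))
  have h2 : κ < κ ⊔ j2 := lt_of_le_of_ne le_sup_left (fun h => hn2 (h ▸ le_sup_right))
  have h12 : κ ⊔ j1 = κ ⊔ j2 :=
    le_antisymm (sup_le le_sup_left (hu1 _ h2)) (sup_le le_sup_left (hu2 _ h1))
  have hmeet := hJSD κ j1 j2 h12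
  have hnle : ¬ j1 ⊓ j2 ≤ κ := by
    intro h
    rw [sup_eq_left.mpr h] at hmeet
    exact absurd hmeet.symm h1.ne
  have e1 : j1 ⊓ j2 = j1 := by
    rcases lt_or_eq_of_le (inf_le_left : j1 ⊓ j2 ≤ j1) with h | h
    · exact absurd (hl1 _ h) hnle
    · exact h
  have e2 : j1 ⊓ j2 = j2 := by
    rcases lt_or_eq_of_le (inf_le_right : j1 ⊓ j2 ≤ j2) with h | h
    · exact absurd (hl2 _ h) hnle
    · exact h
  exact e1.symm.trans e2

/-- In a finite semidistributive lattice, the number of join-irreducible elements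
equals the number of meet-irreducible elements. -/
theorem stmt_0 {α : Type*} [Lattice α] [Fintype α]
    (hJSD : ∀ x y z : α, x ⊔ y = x ⊔ z → x ⊔ y = x ⊔ (y ⊓ z))
    (hMSD : ∀ x y z : α, x ⊓ y = x ⊓ z → x ⊓ y = x ⊓ (y ⊔ z)) :
    {x : α | SupIrred x}.ncard = {x : α | InfIrred x}.ncard := by
  refine le_antisymm (supIrred_card_le hJSD hMSD) ?_
  have hd := supIrred_card_le (α := αᵒᵈ)
    (fun x y z h => hMSD (OrderDual.ofDual x) (OrderDual.ofDual y) (OrderDual.ofDual z) h)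
    (fun x y z h => hJSD (OrderDual.ofDual x) (OrderDual.ofDual y) (OrderDual.ofDual z) h)
  have e1 : {x : αᵒᵈ | SupIrred x} = OrderDual.toDual '' {x : α | InfIrred x} := by
    ext x
    simp only [Set.mem_setOf_eq, Set.mem_image]
    constructor
    · intro h
      exact ⟨OrderDual.ofDual x, supIrred_ofDual.mp h, rfl⟩
    · rintro ⟨y, hy, rfl⟩
      exact hy.dual
  have e2 : {x : αᵒᵈ | InfIrred x} = OrderDual.toDual '' {x : α | SupIrred x} := by
    ext x
    simp only [Set.mem_setOf_eq, Set.mem_image]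
    constructor
    · intro h
      exact ⟨OrderDual.ofDual x, infIrred_ofDual.mp h, rfl⟩
    · rintro ⟨y, hy, rfl⟩
      exact hy.dual
  rwa [e1, e2, Set.ncard_image_of_injective _ OrderDual.toDual.injective,
    Set.ncard_image_of_injective _ OrderDual.toDual.injective] at hd
end

section
/- A graded extremal finite lattice is distributive. That is, if a finite lattice of length k has exactly k join-irreducible elements and exactly k meet-irreducible elements, and all maximal chains have the same length, then it is distributive. -/
/-!
Let `J a` and `M a` be the sets of join-irreducibles below `a` and meet-irreducibles above `a`.
Both determine `a`, so `#J` strictly increases and `#M` strictly decreases along a chain. Put a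
maximal chain through `a`; it has length `k`, and comparing its two halves with
`#J ⊥ = 0`, `#J ⊤ = k`, `#M ⊥ = k`, `#M ⊤ = 0` forces `#J a + #M a = k` for every `a`.
Since `J (a ⊓ b) = J a ∩ J b`, `M (a ⊔ b) = M a ∩ M b` and `J a ∪ J b ⊆ J (a ⊔ b)`,
`M a ∪ M b ⊆ M (a ⊓ b)`, inclusion–exclusion then gives `J (a ⊔ b) = J a ∪ J b`: every
join-irreducible is join-prime, and a lattice in which join-irreducibles are join-prime is
distributive.
-/

/-- A maximal chain of a finite bounded lattice: an unrefinable chain from `⊥` to `⊤`,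
i.e. a list of successive cover relations starting at `⊥` and ending at `⊤`. -/
def IsMaximalChain {α : Type*} [PartialOrder α] [BoundedOrder α] (c : List α) : Prop :=
  c.Chain' (· ⋖ ·) ∧ c.head? = some ⊥ ∧ c.getLast? = some ⊤

open Finset

section Irreducible

variable {α : Type*} [Lattice α]

lemma le_of_forall_supIrred_le [OrderBot α] [WellFoundedLT α] {a b : α}
    (h : ∀ j, SupIrred j → j ≤ a → j ≤ b) : a ≤ b := by
  obtain ⟨s, rfl, hs⟩ := exists_supIrred_decomposition a
  exact Finset.sup_le fun j hj => h j (hs hj) (le_sup (f := id) hj)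

lemma le_of_forall_infIrred_le [OrderTop α] [WellFoundedGT α] {a b : α}
    (h : ∀ m, InfIrred m → b ≤ m → a ≤ m) : a ≤ b := by
  obtain ⟨s, rfl, hs⟩ := exists_infIrred_decomposition b
  exact Finset.le_inf fun m hm => h m (hs hm) (inf_le (f := id) hm)

lemma inf_sup_le_of_forall_supPrime [OrderBot α] [WellFoundedLT α]
    (h : ∀ j : α, SupIrred j → SupPrime j) (a b c : α) :
    a ⊓ (b ⊔ c) ≤ a ⊓ b ⊔ a ⊓ c := by
  refine le_of_forall_supIrred_le fun j hj hja => ?_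
  obtain ⟨hja, hjbc⟩ := le_inf_iff.1 hja
  rcases (h j hj).le_sup.1 hjbc with hjb | hjc
  · exact le_sup_of_le_left (le_inf hja hjb)
  · exact le_sup_of_le_right (le_inf hja hjc)

end Irreducible

section Series

variable {α : Type*} [PartialOrder α]

lemma LTSeries.head_add_length_le_of_strictMono {f : α → ℤ} (hf : StrictMono f)
    (p : LTSeries α) : f p.head + p.length ≤ f p.last :=
  (p.map f hf).head_add_length_le_int

lemma exists_covBy_relSeries [WellFoundedLT α] [WellFoundedGT α] {a b : α} (hab : a ≤ b) :
    ∃ p : RelSeries {(x, y) : α × α | x ⋖ y}, p.head = a ∧ p.last = b := by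
  obtain ⟨f, hf0, n, hfn, hf⟩ := exists_covBy_seq_of_wellFoundedLT_wellFoundedGT_of_le hab
  exact ⟨⟨n, (f ·), fun i => hf i i.2⟩, hf0, hfn⟩

lemma isMaximalChain_toList [BoundedOrder α] (p : RelSeries {(x, y) : α × α | x ⋖ y})
    (h0 : p.head = ⊥) (h1 : p.last = ⊤) : IsMaximalChain p.toList :=
  ⟨p.isChain_toList, by rw [List.head?_eq_some_head p.toList_ne_nil, p.head_toList, h0],
    by rw [List.getLast?_eq_some_getLast p.toList_ne_nil, p.getLast_toList, h1]⟩

end Series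

section Rank

open Classical

variable {α : Type*} [Lattice α] [Fintype α]

noncomputable def supIrredBelow (a : α) : Finset α := {j | SupIrred j ∧ j ≤ a}

noncomputable def infIrredAbove (a : α) : Finset α := {m | InfIrred m ∧ a ≤ m}

@[simp]
lemma mem_supIrredBelow {a j : α} : j ∈ supIrredBelow a ↔ SupIrred j ∧ j ≤ a := by
  simp [supIrredBelow]

@[simp]
lemma mem_infIrredAbove {a m : α} : m ∈ infIrredAbove a ↔ InfIrred m ∧ a ≤ m := by
  simp [infIrredAbove]

lemma supIrredBelow_inf (a b : α) :
    supIrredBelow (a ⊓ b) = supIrredBelow a ∩ supIrredBelow b := by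
  ext; simp only [mem_supIrredBelow, mem_inter, le_inf_iff]; tauto

lemma infIrredAbove_sup (a b : α) :
    infIrredAbove (a ⊔ b) = infIrredAbove a ∩ infIrredAbove b := by
  ext; simp only [mem_infIrredAbove, mem_inter, sup_le_iff]; tauto

variable [BoundedOrder α]

lemma supIrredBelow_subset_supIrredBelow {a b : α} :
    supIrredBelow a ⊆ supIrredBelow b ↔ a ≤ b :=
  ⟨fun h => le_of_forall_supIrred_le fun j hj hja =>
      (mem_supIrredBelow.1 (h (by simp [hj, hja]))).2,
    fun hab j hj => by simp_all [(mem_supIrredBelow.1 hj).2.trans hab]⟩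

lemma infIrredAbove_subset_infIrredAbove {a b : α} :
    infIrredAbove a ⊆ infIrredAbove b ↔ b ≤ a :=
  ⟨fun h => le_of_forall_infIrred_le fun m hm hbm =>
      (mem_infIrredAbove.1 (h (by simp [hm, hbm]))).2,
    fun hba m hm => by simp_all [hba.trans (mem_infIrredAbove.1 hm).2]⟩

lemma strictMono_card_supIrredBelow : StrictMono fun a : α => #(supIrredBelow a) :=
  Finset.card_strictMono.comp <| strictMono_of_le_iff_le fun _ _ =>
    supIrredBelow_subset_supIrredBelow.symm

lemma strictAnti_card_infIrredAbove : StrictAnti fun a : α => #(infIrredAbove a) :=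
  Finset.card_strictMono.comp_strictAnti <| strictAnti_of_le_iff_le fun _ _ =>
    infIrredAbove_subset_infIrredAbove.symm

lemma supIrredBelow_bot : supIrredBelow (⊥ : α) = ∅ := by
  ext j; simpa using fun hj => hj.ne_bot

lemma infIrredAbove_top : infIrredAbove (⊤ : α) = ∅ := by
  ext m; simpa using fun hm => hm.ne_top

lemma card_supIrredBelow_top : #(supIrredBelow (⊤ : α)) = {j : α | SupIrred j}.ncard := by
  rw [Set.ncard_eq_toFinset_card']; congr 1; ext; simp

lemma card_infIrredAbove_bot : #(infIrredAbove (⊥ : α)) = {m : α | InfIrred m}.ncard := by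
  rw [Set.ncard_eq_toFinset_card']; congr 1; ext; simp

lemma supIrredBelow_union_subset (a b : α) :
    supIrredBelow a ∪ supIrredBelow b ⊆ supIrredBelow (a ⊔ b) :=
  union_subset (supIrredBelow_subset_supIrredBelow.2 le_sup_left)
    (supIrredBelow_subset_supIrredBelow.2 le_sup_right)

lemma infIrredAbove_union_subset (a b : α) :
    infIrredAbove a ∪ infIrredAbove b ⊆ infIrredAbove (a ⊓ b) :=
  union_subset (infIrredAbove_subset_infIrredAbove.2 inf_le_left)
    (infIrredAbove_subset_infIrredAbove.2 inf_le_right)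

lemma card_supIrredBelow_head_add_length_le (p : LTSeries α) :
    #(supIrredBelow p.head) + p.length ≤ #(supIrredBelow p.last) := by
  have := p.head_add_length_le_of_strictMono
    (Nat.strictMono_cast.comp (strictMono_card_supIrredBelow (α := α)))
  simp only [Function.comp_apply] at this
  exact_mod_cast this

lemma card_infIrredAbove_last_add_length_le (p : LTSeries α) :
    #(infIrredAbove p.last) + p.length ≤ #(infIrredAbove p.head) := by
  have := p.head_add_length_le_of_strictMono
    (Nat.strictMono_cast.comp_strictAnti (strictAnti_card_infIrredAbove (α := α))).neg
  simp only [Function.comp_apply] at this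
  omega

lemma supIrredBelow_sup_of_card_add_card_eq {k : ℕ}
    (hk : ∀ a : α, #(supIrredBelow a) + #(infIrredAbove a) = k) (a b : α) :
    supIrredBelow (a ⊔ b) = supIrredBelow a ∪ supIrredBelow b := by
  refine (eq_of_subset_of_card_le (supIrredBelow_union_subset a b) ?_).symm
  have hJ := card_union_add_card_inter (supIrredBelow a) (supIrredBelow b)
  have hM := card_union_add_card_inter (infIrredAbove a) (infIrredAbove b)
  have hM' := card_le_card (infIrredAbove_union_subset a b)
  rw [← supIrredBelow_inf] at hJ
  rw [← infIrredAbove_sup] at hM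
  have := hk a; have := hk b; have := hk (a ⊔ b); have := hk (a ⊓ b)
  omega

lemma supPrime_of_card_add_card_eq {k : ℕ}
    (hk : ∀ a : α, #(supIrredBelow a) + #(infIrredAbove a) = k) {j : α} (hj : SupIrred j) :
    SupPrime j := by
  refine ⟨hj.1, fun {b c} hjbc => ?_⟩
  have : j ∈ supIrredBelow (b ⊔ c) := mem_supIrredBelow.2 ⟨hj, hjbc⟩
  rw [supIrredBelow_sup_of_card_add_card_eq hk] at this
  simpa [hj] using this

lemma card_supIrredBelow_add_card_infIrredAbove {k : ℕ}
    (hlen : ∀ c : List α, IsMaximalChain c → c.length = k + 1)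
    (hJ : {j : α | SupIrred j}.ncard = k) (hM : {m : α | InfIrred m}.ncard = k) (a : α) :
    #(supIrredBelow a) + #(infIrredAbove a) = k := by
  obtain ⟨p, hp₀, hp₁⟩ := exists_covBy_relSeries (bot_le : ⊥ ≤ a)
  obtain ⟨q, hq₀, hq₁⟩ := exists_covBy_relSeries (le_top : a ≤ ⊤)
  have hpq : p.length + q.length = k := by
    have := hlen _
      (isMaximalChain_toList (p.smash q (hp₁.trans hq₀.symm)) (by simpa) (by simpa))
    simpa [← add_assoc] using this
  have hlt : {(x, y) : α × α | x ⋖ y} ≤ {(x, y) : α × α | x < y} := fun _ h => CovBy.lt h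
  have hJp : #(supIrredBelow p.head) + p.length ≤ #(supIrredBelow p.last) :=
    card_supIrredBelow_head_add_length_le (p.ofLE hlt)
  have hJq : #(supIrredBelow q.head) + q.length ≤ #(supIrredBelow q.last) :=
    card_supIrredBelow_head_add_length_le (q.ofLE hlt)
  have hMp : #(infIrredAbove p.last) + p.length ≤ #(infIrredAbove p.head) :=
    card_infIrredAbove_last_add_length_le (p.ofLE hlt)
  have hMq : #(infIrredAbove q.last) + q.length ≤ #(infIrredAbove q.head) :=
    card_infIrredAbove_last_add_length_le (q.ofLE hlt)
  simp only [hp₀, hp₁, hq₀, hq₁, supIrredBelow_bot, infIrredAbove_top, card_empty,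
    card_supIrredBelow_top, card_infIrredAbove_bot, hJ, hM] at hJp hJq hMp hMq
  omega

end Rank

theorem stmt_1_general {α : Type*} [Lattice α] [Fintype α] [BoundedOrder α] (k : ℕ)
    (hex : ∃ c : List α, IsMaximalChain c ∧ c.length = k + 1)
    (hgraded : ∀ c c' : List α, IsMaximalChain c → IsMaximalChain c' → c.length = c'.length)
    (hJ : {x : α | SupIrred x}.ncard = k)
    (hM : {x : α | InfIrred x}.ncard = k) :
    ∀ x y z : α, x ⊓ (y ⊔ z) = (x ⊓ y) ⊔ (x ⊓ z) := by
  obtain ⟨c₀, hc₀, hc₀len⟩ := hex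
  have hlen (c : List α) (hc : IsMaximalChain c) : c.length = k + 1 :=
    (hgraded c c₀ hc hc₀).trans hc₀len
  have hk := card_supIrredBelow_add_card_infIrredAbove hlen hJ hM
  exact fun x y z => (inf_sup_le_of_forall_supPrime
    (fun j hj => supPrime_of_card_add_card_eq hk hj) x y z).antisymm le_inf_sup

/-- A graded extremal finite lattice is distributive: if a finite lattice of length `k`
has exactly `k` join-irreducible and `k` meet-irreducible elements, and all maximal
chains have the same length, then it is distributive. -/
theorem stmt_1 {α : Type*} [Lattice α] [Fintype α] [BoundedOrder α] (k : ℕ)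
    (hex : ∃ c : List α, IsMaximalChain c ∧ c.length = k + 1)
    (hmax : ∀ c : List α, IsMaximalChain c → c.length ≤ k + 1)
    (hgraded : ∀ c c' : List α, IsMaximalChain c → IsMaximalChain c' → c.length = c'.length)
    (hJ : {x : α | SupIrred x}.ncard = k)
    (hM : {x : α | InfIrred x}.ncard = k) :
    ∀ x y z : α, x ⊓ (y ⊔ z) = (x ⊓ y) ⊔ (x ⊓ z) :=
  stmt_1_general k hex hgraded hJ hM
end

section
/- In a finite lattice L, an element x is left-modular (i.e., (y ∨ x) ∧ z = y ∨ (x ∧ z) for all y < z) if and only if for every pair y < z in L we have x ∧ y ≠ x ∧ z or x ∨ y ≠ x ∨ z. -/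
/-- In a finite lattice, `x` is left-modular (`(y ⊔ x) ⊓ z = y ⊔ (x ⊓ z)` for all `y < z`)
iff for every `y < z` we have `x ⊓ y ≠ x ⊓ z` or `x ⊔ y ≠ x ⊔ z`. -/
theorem stmt_2 {α : Type*} [Lattice α] [Fintype α] (x : α) :
    (∀ y z : α, y < z → (y ⊔ x) ⊓ z = y ⊔ (x ⊓ z)) ↔
      (∀ y z : α, y < z → x ⊓ y ≠ x ⊓ z ∨ x ⊔ y ≠ x ⊔ z) := by
  constructor
  · intro h y z hyz
    by_contra hc
    push_neg at hc
    obtain ⟨h1, h2⟩ := hc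
    have := h y z hyz
    have hz : (y ⊔ x) ⊓ z = z := by
      rw [sup_comm, h2, sup_comm, inf_eq_right.mpr le_sup_left]
    have hy : y ⊔ (x ⊓ z) = y := by
      rw [← h1, sup_eq_left.mpr (inf_le_right)]
    rw [hz, hy] at this
    exact hyz.ne' this
  · intro h y z hyz
    set a := y ⊔ (x ⊓ z) with ha
    set b := (y ⊔ x) ⊓ z with hb
    have hab : a ≤ b := by
      apply sup_le (le_inf (le_sup_left.trans (le_refl _)) hyz.le)
      exact le_inf (inf_le_left.trans le_sup_right) inf_le_right
    rcases eq_or_lt_of_le hab with heq | hlt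
    · exact heq.symm
    · exfalso
      have hinf : x ⊓ a = x ⊓ b := by
        apply le_antisymm (inf_le_inf_left _ hab)
        calc x ⊓ b ≤ x ⊓ z := inf_le_inf_left _ inf_le_right
          _ ≤ x ⊓ a := le_inf inf_le_left le_sup_right
      have hsup : x ⊔ a = x ⊔ b := by
        apply le_antisymm (sup_le_sup_left hab _)
        calc x ⊔ b ≤ x ⊔ (y ⊔ x) := sup_le_sup_left inf_le_left _
          _ = x ⊔ y := by rw [sup_comm y x, ← sup_assoc, sup_idem]
          _ ≤ x ⊔ a := sup_le_sup_left le_sup_left _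
      rcases h a b hlt with h' | h' <;> exact h' (by assumption)
end

section
/- In a finite lattice L, an element x is left-modular if and only if for every cover relation y ⋖ z in L exactly one of the equalities x ∧ y = x ∧ z and x ∨ y = x ∨ z holds. -/
/-- In a finite lattice, `x` is left-modular iff for every cover relation `y ⋖ z`
exactly one of `x ⊓ y = x ⊓ z` and `x ⊔ y = x ⊔ z` holds. -/
theorem stmt_3 {α : Type*} [Lattice α] [Fintype α] (x : α) :
    (∀ y z : α, y < z → (y ⊔ x) ⊓ z = y ⊔ (x ⊓ z)) ↔
      (∀ y z : α, y ⋖ z → Xor' (x ⊓ y = x ⊓ z) (x ⊔ y = x ⊔ z)) := by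
  constructor
  · intro h y z hc
    have hlt := hc.lt
    have heq := h y z hlt
    have hy : y ≤ (y ⊔ x) ⊓ z := le_inf le_sup_left hlt.le
    have hcase : (y ⊔ x) ⊓ z = y ∨ (y ⊔ x) ⊓ z = z :=
      hc.eq_or_eq hy inf_le_right
    have hnotboth : ¬(x ⊓ y = x ⊓ z ∧ x ⊔ y = x ⊔ z) := by
      rintro ⟨h1, h2⟩
      have hz : z ≤ y ⊔ x := by
        rw [sup_comm, h2]; exact le_sup_right
      have e1 : (y ⊔ x) ⊓ z = z := inf_eq_right.mpr hz
      have e2 : y ⊔ (x ⊓ z) = y := by rw [← h1]; exact sup_eq_left.mpr inf_le_right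
      exact hlt.ne' ((e1.symm.trans heq).trans e2)
    rcases hcase with h1 | h1
    · have hinf : x ⊓ y = x ⊓ z := by
        rw [h1] at heq
        have hxz : x ⊓ z ≤ y := le_sup_right.trans heq.symm.le
        exact le_antisymm (inf_le_inf_left x hlt.le) (le_inf inf_le_left hxz)
      exact Or.inl ⟨hinf, fun h2 => hnotboth ⟨hinf, h2⟩⟩
    · have hsup : x ⊔ y = x ⊔ z := by
        have hz : z ≤ y ⊔ x := h1 ▸ inf_le_left
        exact le_antisymm (sup_le_sup_left hlt.le x)
          (sup_le le_sup_left (hz.trans (sup_le le_sup_right le_sup_left)))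
      exact Or.inr ⟨hsup, fun h2 => hnotboth ⟨h2, hsup⟩⟩
  · intro h y z hlt
    have hle : y ⊔ (x ⊓ z) ≤ (y ⊔ x) ⊓ z :=
      sup_le (le_inf le_sup_left hlt.le) (le_inf (inf_le_left.trans le_sup_right) inf_le_right)
    by_contra hne
    have hlt2 : y ⊔ (x ⊓ z) < (y ⊔ x) ⊓ z := lt_of_le_of_ne hle (fun e => hne e.symm)
    obtain ⟨w, hcov, hwle⟩ := exists_covBy_le_of_lt hlt2
    set a := y ⊔ (x ⊓ z) with ha
    have hwz : w ≤ z := hwle.trans inf_le_right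
    have h1 : x ⊓ a = x ⊓ w := by
      refine le_antisymm (inf_le_inf_left x hcov.le) (le_inf inf_le_left ?_)
      calc x ⊓ w ≤ x ⊓ z := inf_le_inf_left x hwz
        _ ≤ a := le_sup_right
    have h2 : x ⊔ a = x ⊔ w := by
      refine le_antisymm (sup_le_sup_left hcov.le x) (sup_le le_sup_left ?_)
      calc w ≤ y ⊔ x := hwle.trans inf_le_left
        _ ≤ x ⊔ a := sup_le (le_sup_left.trans le_sup_right) le_sup_left
    rcases h a w hcov with ⟨_, hn⟩ | ⟨_, hn⟩
    · exact hn h2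
    · exact hn h1
end

section
/- Every closed interval of a trim lattice is trim. -/
/-
Let `p = x₀ ⋖ x₁ ⋖ ⋯ ⋖ x_k = q` be a maximal chain of left-modular elements of a trim interval
`[p, q]`. Every join-irreducible `j` switches on at exactly one step of it (the `l` with `j ≰ x_l`
and `j ≤ x_{l+1}`), and every step switches on some join-irreducible (a minimal element of
`[p, x_{l+1}]` not below `x_l`); as there are exactly `k` join-irreducibles, each step switches
on exactly one. The same holds for meet-irreducibles `w` and the predicate `x_l ≰ w`, and the same
labelling shows that no chain has more steps than there are join- (or meet-) irreducibles.

For `v ∈ [p, q]`, left-modularity leaves no gaps in `x_l ⊓ v`, so after removing repetitions it is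
a maximal chain of left-modular elements of `[p, v]`, with `m` steps say. The join-irreducibles of
`[p, v]` are those of `[p, q]` below `v`, and each switches on at one of these `m` steps. A
meet-irreducible `z` of `[p, v]` is `w ⊓ v` for the meet-irreducible `w ≥ z ⊔ x_l` of `[p, q]`
switching at the step `l` where `x_l ⊓ v` leaves `[p, z]`. So both counts are at most `m`, and at
least `m` by the chain bound: `[p, v]` is trim. Upper intervals follow by order duality, and
`[u, v]` is an upper interval of `[⊥, v]`.
-/

section TrimDefs

variable {α : Type*} [Lattice α]

/-- `b` covers `a` within the subset `S`. -/
def CovByIn (S : Set α) (a b : α) : Prop :=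
  a ∈ S ∧ b ∈ S ∧ a < b ∧ ¬ ∃ c ∈ S, a < c ∧ c < b

/-- A chain of successive covers within `S`. -/
def IsCoverChain (S : Set α) (c : List α) : Prop :=
  c.Chain' (CovByIn S) ∧ ∀ x ∈ c, x ∈ S

/-- Join-irreducible in `S`: has exactly one lower cover within `S`. -/
def JoinIrrIn (S : Set α) (x : α) : Prop :=
  x ∈ S ∧ ∃! y, CovByIn S y x

/-- Meet-irreducible in `S`: has exactly one upper cover within `S`. -/
def MeetIrrIn (S : Set α) (x : α) : Prop :=
  x ∈ S ∧ ∃! y, CovByIn S x y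

/-- `x` is left-modular in `S`: `(y ⊔ x) ⊓ z = y ⊔ (x ⊓ z)` for all `y < z` in `S`.
(For `S` a closed interval or the whole lattice, `⊔` and `⊓` computed in the
ambient lattice agree with those of the sublattice `S`.) -/
def LeftModularIn (S : Set α) (x : α) : Prop :=
  x ∈ S ∧ ∀ y ∈ S, ∀ z ∈ S, y < z → (y ⊔ x) ⊓ z = y ⊔ (x ⊓ z)

/-- The (closed-interval) lattice `S` with least element `u` and greatest element `v`
is trim of length `k`: it has a maximal (unrefinable) chain from `u` to `v` with `k`
cover steps consisting of left-modular elements, every maximal chain has at most `k`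
cover steps, and there are exactly `k` join-irreducible and `k` meet-irreducible
elements. -/
def IsTrimIn (S : Set α) (u v : α) (k : ℕ) : Prop :=
  (∃ c : List α, IsCoverChain S c ∧ c.head? = some u ∧ c.getLast? = some v ∧
      c.length = k + 1 ∧ ∀ x ∈ c, LeftModularIn S x) ∧
  (∀ c : List α, IsCoverChain S c → c.head? = some u → c.getLast? = some v →
      c.length ≤ k + 1) ∧
  {x : α | JoinIrrIn S x}.ncard = k ∧ {x : α | MeetIrrIn S x}.ncard = k

end TrimDefs

open Set OrderDual

section Basic

variable {α : Type*} [Lattice α] {S : Set α} {p q v j w : α}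

theorem CovByIn.eq_or_eq {a b c : α} (h : CovByIn S a b) (hc : c ∈ S) (hac : a ≤ c)
    (hcb : c ≤ b) : c = a ∨ c = b := by
  by_contra! hne
  exact h.2.2.2 ⟨c, hc, lt_of_le_of_ne hac hne.1.symm, lt_of_le_of_ne hcb hne.2⟩

theorem JoinIrrIn.left_lt (hj : JoinIrrIn (Icc p q) j) : p < j :=
  let ⟨_, _, hy, _⟩ := hj
  hy.1.1.trans_lt hy.2.2.1

theorem MeetIrrIn.lt_right (hw : MeetIrrIn (Icc p q) w) : w < q :=
  let ⟨_, _, hy, _⟩ := hw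
  hy.2.2.1.trans_le hy.2.1.2

theorem LeftModularIn.sup_inf_eq {m y z : α} (h : LeftModularIn S m) (hy : y ∈ S) (hz : z ∈ S)
    (hyz : y ≤ z) :
    (y ⊔ m) ⊓ z = y ⊔ (m ⊓ z) := by
  rcases hyz.lt_or_eq with hyz | rfl
  · exact h.2 y hy z hz hyz
  · rw [inf_eq_right.2 le_sup_left, sup_eq_left.2 inf_le_right]

theorem joinIrrIn_Icc_iff (hvq : v ≤ q) :
    JoinIrrIn (Icc p v) j ↔ JoinIrrIn (Icc p q) j ∧ j ≤ v := by
  have hcov : ∀ y, j ≤ v → (CovByIn (Icc p v) y j ↔ CovByIn (Icc p q) y j) := fun y hjv =>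
    ⟨fun ⟨hy, hj, hyj, hno⟩ => ⟨⟨hy.1, hy.2.trans hvq⟩, ⟨hj.1, hjv.trans hvq⟩, hyj,
        fun ⟨c, hc, h₁, h₂⟩ => hno ⟨c, ⟨hc.1, h₂.le.trans hjv⟩, h₁, h₂⟩⟩,
      fun ⟨hy, hj, hyj, hno⟩ => ⟨⟨hy.1, hyj.le.trans hjv⟩, ⟨hj.1, hjv⟩, hyj,
        fun ⟨c, hc, h₁, h₂⟩ => hno ⟨c, ⟨hc.1, hc.2.trans hvq⟩, h₁, h₂⟩⟩⟩
  constructor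
  · rintro ⟨hj, h⟩
    exact ⟨⟨⟨hj.1, hj.2.trans hvq⟩, by simpa only [hcov _ hj.2] using h⟩, hj.2⟩
  · rintro ⟨⟨hj, h⟩, hjv⟩
    exact ⟨⟨hj.1, hjv⟩, by simpa only [hcov _ hjv] using h⟩

end Basic

section Duality

variable {α : Type*} [Lattice α] {S : Set α} {a b m : α}

theorem covByIn_toDual_iff :
    CovByIn (ofDual ⁻¹' S) (toDual b) (toDual a) ↔ CovByIn S a b :=
  ⟨fun ⟨hb, ha, hlt, hno⟩ => ⟨ha, hb, hlt, fun ⟨c, hc, h₁, h₂⟩ => hno ⟨toDual c, hc, h₂, h₁⟩⟩,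
    fun ⟨ha, hb, hlt, hno⟩ => ⟨hb, ha, hlt, fun ⟨c, hc, h₁, h₂⟩ => hno ⟨ofDual c, hc, h₂, h₁⟩⟩⟩

theorem joinIrrIn_toDual_iff : JoinIrrIn (ofDual ⁻¹' S) (toDual m) ↔ MeetIrrIn S m :=
  and_congr_right' <| ofDual.existsUnique_congr fun _ => covByIn_toDual_iff

theorem meetIrrIn_toDual_iff : MeetIrrIn (ofDual ⁻¹' S) (toDual m) ↔ JoinIrrIn S m :=
  and_congr_right' <| ofDual.existsUnique_congr fun _ => covByIn_toDual_iff

theorem LeftModularIn.dual (h : LeftModularIn S m) :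
    LeftModularIn (ofDual ⁻¹' S) (toDual m) := by
  refine ⟨h.1, fun y hy z hz hyz => ?_⟩
  have e : (ofDual z ⊔ m) ⊓ ofDual y = ofDual z ⊔ (m ⊓ ofDual y) := h.2 _ hz _ hy hyz
  change (ofDual y ⊓ m) ⊔ ofDual z = ofDual y ⊓ (m ⊔ ofDual z)
  calc (ofDual y ⊓ m) ⊔ ofDual z = ofDual z ⊔ (m ⊓ ofDual y) := by ac_rfl
    _ = (ofDual z ⊔ m) ⊓ ofDual y := e.symm
    _ = ofDual y ⊓ (m ⊔ ofDual z) := by ac_rfl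

theorem IsCoverChain.dual {c : List α} (h : IsCoverChain S c) :
    IsCoverChain (ofDual ⁻¹' S) (c.map toDual).reverse :=
  ⟨List.isChain_reverse.2 <| (List.isChain_map _).2 <| h.1.imp fun _ _ => covByIn_toDual_iff.2,
    by simpa using h.2⟩

theorem IsCoverChain.of_dual {c : List αᵒᵈ} (h : IsCoverChain (ofDual ⁻¹' S) c) :
    IsCoverChain S (c.map ofDual).reverse := h.dual

theorem ncard_joinIrrIn_toDual :
    {x : αᵒᵈ | JoinIrrIn (ofDual ⁻¹' S) x}.ncard = {x | MeetIrrIn S x}.ncard := by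
  rw [← Set.ncard_image_of_injective _ ofDual.injective]
  congr 1
  ext x
  exact ⟨fun ⟨y, hy, e⟩ => e ▸ joinIrrIn_toDual_iff.1 hy,
    fun h => ⟨toDual x, joinIrrIn_toDual_iff.2 h, rfl⟩⟩

theorem ncard_meetIrrIn_toDual :
    {x : αᵒᵈ | MeetIrrIn (ofDual ⁻¹' S) x}.ncard = {x | JoinIrrIn S x}.ncard := by
  rw [← Set.ncard_image_of_injective _ ofDual.injective]
  congr 1
  ext x
  exact ⟨fun ⟨y, hy, e⟩ => e ▸ meetIrrIn_toDual_iff.1 hy,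
    fun h => ⟨toDual x, meetIrrIn_toDual_iff.2 h, rfl⟩⟩

theorem IsTrimIn.dual {u v : α} {k : ℕ} (h : IsTrimIn S u v k) :
    IsTrimIn (ofDual ⁻¹' S) (toDual v) (toDual u) k := by
  obtain ⟨⟨c, hc, hu, hv, hlen, hlm⟩, hmax, hJ, hM⟩ := h
  refine ⟨⟨(c.map toDual).reverse, hc.dual, ?_, ?_, by simpa using hlen, ?_⟩,
    fun d hd hdv hdu => ?_, ncard_joinIrrIn_toDual.trans hM, ncard_meetIrrIn_toDual.trans hJ⟩
  · simp [List.head?_reverse, hv]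
  · simp [List.getLast?_reverse, hu]
  · simpa using fun x hx => (hlm x hx).dual
  · simpa using hmax _ hd.of_dual (by simp [List.head?_reverse, hdu])
      (by simp [List.getLast?_reverse, hdv])

theorem IsTrimIn.of_dual {u v : αᵒᵈ} {k : ℕ} (h : IsTrimIn (ofDual ⁻¹' S) u v k) :
    IsTrimIn S (ofDual v) (ofDual u) k := h.dual

end Duality

section Finite

variable {α : Type*} [Lattice α] [Finite α] {S : Set α} {p q b y z : α}

theorem exists_covByIn_le_of_lt (hz : z ∈ S) (hy : y ∈ S) (hzy : z < y) :
    ∃ t, CovByIn S z t ∧ t ≤ y := by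
  obtain ⟨t, ⟨htS, hzt, hty⟩, hmin⟩ :=
    (toFinite {t | t ∈ S ∧ z < t ∧ t ≤ y}).exists_minimal ⟨y, hy, hzy, le_rfl⟩
  exact ⟨t, ⟨hz, htS, hzt, fun ⟨c, hc, hzc, hct⟩ =>
    (hmin ⟨hc, hzc, hct.le.trans hty⟩ hct.le).not_gt hct⟩, hty⟩

theorem exists_covByIn_ge_of_lt (hz : z ∈ S) (hy : y ∈ S) (hzy : z < y) :
    ∃ t, CovByIn S t y ∧ z ≤ t := by
  obtain ⟨t, ht, hzt⟩ :=
    exists_covByIn_le_of_lt (S := ofDual ⁻¹' S) (z := toDual y) (y := toDual z) hy hz hzy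
  exact ⟨ofDual t, covByIn_toDual_iff.1 ht, hzt⟩

theorem MeetIrrIn.lt_inf {y₁ y₂ : α} (hz : MeetIrrIn S z) (hy₁ : y₁ ∈ S) (hy₂ : y₂ ∈ S)
    (h₁ : z < y₁) (h₂ : z < y₂) : z < y₁ ⊓ y₂ := by
  obtain ⟨t, ht, huniq⟩ := hz.2
  obtain ⟨t₁, ht₁, ht₁y⟩ := exists_covByIn_le_of_lt hz.1 hy₁ h₁
  obtain ⟨t₂, ht₂, ht₂y⟩ := exists_covByIn_le_of_lt hz.1 hy₂ h₂
  rw [huniq t₁ ht₁] at ht₁y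
  rw [huniq t₂ ht₂] at ht₂y
  exact ht.2.2.1.trans_le (le_inf ht₁y ht₂y)

theorem exists_joinIrrIn_le_not_le (hpb : p ≤ b) (hz : z ∈ Icc p q) (hzb : ¬ z ≤ b) :
    ∃ j, JoinIrrIn (Icc p q) j ∧ j ≤ z ∧ ¬ j ≤ b := by
  obtain ⟨j, ⟨hj, hjz, hjb⟩, hmin⟩ :=
    (toFinite {t | t ∈ Icc p q ∧ t ≤ z ∧ ¬ t ≤ b}).exists_minimal ⟨z, hz, le_rfl, hzb⟩
  have hcov_le : ∀ d, CovByIn (Icc p q) d j → d ≤ b := fun d hd => by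
    by_contra hdb
    exact hd.2.2.1.not_ge (hmin ⟨hd.1, hd.2.2.1.le.trans hjz, hdb⟩ hd.2.2.1.le)
  have hpj : p < j := lt_of_le_of_ne hj.1 (by rintro rfl; exact hjb hpb)
  obtain ⟨d, hd, -⟩ := exists_covByIn_ge_of_lt (left_mem_Icc.2 (hj.1.trans hj.2)) hj hpj
  refine ⟨j, ⟨hj, d, hd, fun e he => ?_⟩, hjz, hjb⟩
  -- lower covers `d ≠ e` of `j` would have `d ⊔ e = j`, yet both lie below `b`
  have hde : d ⊔ e ≤ j := sup_le hd.2.2.1.le he.2.2.1.le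
  rcases hd.eq_or_eq ⟨hd.1.1.trans le_sup_left, hde.trans hj.2⟩ le_sup_left hde with h | h
  · exact ((he.eq_or_eq hd.1 (le_sup_right.trans h.le) hd.2.2.1.le).resolve_right
      hd.2.2.1.ne).symm
  · exact absurd (h ▸ sup_le (hcov_le d hd) (hcov_le e he)) hjb

theorem exists_meetIrrIn_ge_not_ge (hbq : b ≤ q) (hz : z ∈ Icc p q) (hbz : ¬ b ≤ z) :
    ∃ w, MeetIrrIn (Icc p q) w ∧ z ≤ w ∧ ¬ b ≤ w := by
  obtain ⟨j, hj, hjz, hjb⟩ := exists_joinIrrIn_le_not_le (p := toDual q) (q := toDual p)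
    (b := toDual b) (z := toDual z) hbq ⟨hz.2, hz.1⟩ hbz
  rw [Icc_toDual] at hj
  exact ⟨ofDual j, joinIrrIn_toDual_iff.1 hj, hjz, hjb⟩

end Finite

section Switch

def SwitchesAt (P : ℕ → Prop) (l : ℕ) : Prop := ¬ P l ∧ P (l + 1)

noncomputable def switchIdx (P : ℕ → Prop) : ℕ := sInf {l | P (l + 1)}

variable {P : ℕ → Prop} {l n : ℕ}

theorem switchesAt_switchIdx (h0 : ¬ P 0) (hn : P n) :
    SwitchesAt P (switchIdx P) ∧ switchIdx P < n := by
  obtain ⟨m, rfl⟩ : ∃ m, n = m + 1 := Nat.exists_eq_succ_of_ne_zero (by rintro rfl; exact h0 hn)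
  refine ⟨⟨?_, Nat.sInf_mem (s := {l | P (l + 1)}) ⟨m, hn⟩⟩, Nat.lt_succ_of_le (Nat.sInf_le hn)⟩
  rcases h : switchIdx P with _ | s
  · exact h0
  · exact Nat.notMem_of_lt_sInf (s := {l | P (l + 1)}) (by unfold switchIdx at h; omega)

theorem SwitchesAt.switchIdx_eq (hP : Monotone P) (h : SwitchesAt P l) : switchIdx P = l :=
  le_antisymm (Nat.sInf_le h.2) (le_csInf ⟨l, h.2⟩ fun _ hm => not_lt.1 fun hml => h.1 (hP hml hm))

variable {ι : Type*} {A : Set ι} {Q : ι → ℕ → Prop}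

theorem ncard_le_ncard_of_forall_switchesAt {L : Set ℕ} (hA : A.Finite)
    (hQ : ∀ a ∈ A, Monotone (Q a)) (h : ∀ l ∈ L, ∃ a ∈ A, SwitchesAt (Q a) l) :
    L.ncard ≤ A.ncard :=
  calc L.ncard ≤ ((fun a => switchIdx (Q a)) '' A).ncard :=
        ncard_le_ncard (fun l hl => let ⟨a, ha, hal⟩ := h l hl; ⟨a, ha, hal.switchIdx_eq (hQ a ha)⟩)
          (hA.image _)
    _ ≤ A.ncard := ncard_image_le hA

theorem SwitchesAt.eq_of_ncard_le {a b : ι} (hA : A.Finite) (hcard : A.ncard ≤ n)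
    (hQ : ∀ a ∈ A, Monotone (Q a)) (hend : ∀ a ∈ A, ¬ Q a 0 ∧ Q a n)
    (hsurj : ∀ l < n, ∃ a ∈ A, SwitchesAt (Q a) l)
    (ha : a ∈ A) (hb : b ∈ A) (hal : SwitchesAt (Q a) l) (hbl : SwitchesAt (Q b) l) : a = b := by
  refine inj_on_of_surj_on_of_ncard_le (t := (Finset.range n : Set ℕ))
    (fun a _ => switchIdx (Q a)) (fun a ha => ?_) (fun l hl => ?_) ?_ ha hb ?_ hA
  · simpa using (switchesAt_switchIdx (hend a ha).1 (hend a ha).2).2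
  · obtain ⟨a, ha, hal⟩ := hsurj l (by simpa using hl)
    exact ⟨a, ha, hal.switchIdx_eq (hQ a ha)⟩
  · rwa [ncard_coe_finset, Finset.card_range]
  · rw [hal.switchIdx_eq (hQ a ha), hbl.switchIdx_eq (hQ b hb)]

end Switch

section Steps

variable {α : Type*} [Lattice α] [Finite α] {p q : α} {x : ℕ → α} {l : ℕ} {L : Set ℕ}

theorem exists_joinIrrIn_switchesAt (hmem : ∀ l, x l ∈ Icc p q) (hl : x l < x (l + 1)) :
    ∃ j, JoinIrrIn (Icc p q) j ∧ SwitchesAt (j ≤ x ·) l :=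
  let ⟨j, hj, hjx, hjx'⟩ := exists_joinIrrIn_le_not_le (hmem l).1 (hmem (l + 1)) hl.not_ge
  ⟨j, hj, hjx', hjx⟩

theorem exists_meetIrrIn_switchesAt (hmem : ∀ l, x l ∈ Icc p q) (hl : x l < x (l + 1)) :
    ∃ w, MeetIrrIn (Icc p q) w ∧ SwitchesAt (¬ x · ≤ w) l :=
  let ⟨w, hw, hxw, hxw'⟩ := exists_meetIrrIn_ge_not_ge (hmem (l + 1)).2 (hmem l) hl.not_ge
  ⟨w, hw, not_not.2 hxw, hxw'⟩

theorem ncard_le_ncard_joinIrrIn (hx : Monotone x) (hmem : ∀ l, x l ∈ Icc p q)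
    (hL : ∀ l ∈ L, x l < x (l + 1)) : L.ncard ≤ {j | JoinIrrIn (Icc p q) j}.ncard :=
  ncard_le_ncard_of_forall_switchesAt (toFinite _) (fun _ _ _ _ hab h => h.trans (hx hab))
    fun _ hl => exists_joinIrrIn_switchesAt hmem (hL _ hl)

theorem ncard_le_ncard_meetIrrIn (hx : Monotone x) (hmem : ∀ l, x l ∈ Icc p q)
    (hL : ∀ l ∈ L, x l < x (l + 1)) : L.ncard ≤ {w | MeetIrrIn (Icc p q) w}.ncard :=
  ncard_le_ncard_of_forall_switchesAt (Q := fun w l => ¬ x l ≤ w) (toFinite _)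
    (fun _ _ _ _ hab h h' => h ((hx hab).trans h'))
    fun _ hl => exists_meetIrrIn_switchesAt hmem (hL _ hl)

end Steps

section Destutter

variable {β : Type*} [DecidableEq β] (a : ℕ → β) {n : ℕ}

def destutterSeq : ℕ → List β
  | 0 => [a 0]
  | n + 1 => if a n = a (n + 1) then destutterSeq n else destutterSeq n ++ [a (n + 1)]

theorem head?_destutterSeq : (destutterSeq a n).head? = some (a 0) := by
  induction n with
  | zero => rfl
  | succ n ih => unfold destutterSeq; split_ifs <;> simp [ih, List.head?_append]

theorem getLast?_destutterSeq : (destutterSeq a n).getLast? = some (a n) := by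
  induction n with
  | zero => rfl
  | succ n ih =>
    unfold destutterSeq
    split_ifs with h
    · rw [ih, h]
    · simp

theorem length_destutterSeq :
    (destutterSeq a n).length = ((Finset.range n).filter fun l => a l ≠ a (l + 1)).card + 1 := by
  induction n with
  | zero => rfl
  | succ n ih =>
    unfold destutterSeq
    rw [Finset.range_add_one, Finset.filter_insert]
    by_cases h : a n = a (n + 1)
    · simp [h, ih]
    · simp [h, ih, Finset.card_insert_of_notMem]

theorem exists_eq_of_mem_destutterSeq {b : β} (hb : b ∈ destutterSeq a n) :
    ∃ l ≤ n, b = a l := by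
  induction n with
  | zero => exact ⟨0, le_rfl, List.mem_singleton.1 hb⟩
  | succ n ih =>
    unfold destutterSeq at hb
    split_ifs at hb
    · obtain ⟨l, hl, rfl⟩ := ih hb
      exact ⟨l, hl.trans n.le_succ, rfl⟩
    · rcases List.mem_append.1 hb with hb | hb
      · obtain ⟨l, hl, rfl⟩ := ih hb
        exact ⟨l, hl.trans n.le_succ, rfl⟩
      · exact ⟨n + 1, le_rfl, List.mem_singleton.1 hb⟩

theorem isChain_destutterSeq {R : β → β → Prop}
    (h : ∀ l < n, a l ≠ a (l + 1) → R (a l) (a (l + 1))) :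
    (destutterSeq a n).IsChain R := by
  induction n with
  | zero => exact List.isChain_singleton _
  | succ n ih =>
    have ih := ih fun l hl => h l (hl.trans n.lt_succ_self)
    unfold destutterSeq
    split_ifs with hn
    · exact ih
    · refine List.isChain_append.2 ⟨ih, List.isChain_singleton _, fun b hb c hc => ?_⟩
      rw [getLast?_destutterSeq, Option.mem_some_iff] at hb
      rw [List.head?_singleton, Option.mem_some_iff] at hc
      exact hb ▸ hc ▸ h n n.lt_succ_self hn

end Destutter

theorem List.getD_mem_of_getLast? {β : Type*} {c : List β} {a : β} (ha : c.getLast? = some a)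
    (l : ℕ) : c.getD l a ∈ c := by
  rcases lt_or_ge l c.length with hl | hl
  · exact List.getD_eq_getElem c a hl ▸ List.getElem_mem hl
  · rw [List.getD_eq_default c a hl]
    exact List.mem_of_getLast? ha

section CoverSeq

variable {α : Type*} [Lattice α] {p q v w z : α} {k l : ℕ} {x : ℕ → α}

/-- A maximal chain `p = x 0 ⋖ ⋯ ⋖ x k = q`, extended by `q` beyond `k` so that `x` is monotone
on all of `ℕ`. -/
structure IsCoverSeq (p q : α) (k : ℕ) (x : ℕ → α) : Prop where
  zero : x 0 = p
  eq_of_le : ∀ l, k ≤ l → x l = q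
  covByIn : ∀ l < k, CovByIn (Icc p q) (x l) (x (l + 1))

namespace IsCoverSeq

theorem monotone (hx : IsCoverSeq p q k x) : Monotone x :=
  monotone_nat_of_le_succ fun l => (lt_or_ge l k).elim (fun hl => (hx.covByIn l hl).2.2.1.le)
    fun hl => (hx.eq_of_le l hl).trans (hx.eq_of_le (l + 1) (by omega)).symm |>.le

theorem mem (hx : IsCoverSeq p q k x) (l : ℕ) : x l ∈ Icc p q :=
  ⟨hx.zero ▸ hx.monotone (Nat.zero_le l),
    (hx.monotone (Nat.le_add_right l k)).trans (hx.eq_of_le _ (Nat.le_add_left k l)).le⟩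

theorem eq_or_eq (hx : IsCoverSeq p q k x) {c : α} (hc : c ∈ Icc p q) (h₁ : x l ≤ c)
    (h₂ : c ≤ x (l + 1)) : c = x l ∨ c = x (l + 1) := by
  rcases lt_or_ge l k with hl | hl
  · exact (hx.covByIn l hl).eq_or_eq hc h₁ h₂
  · rw [hx.eq_of_le (l + 1) (by omega)] at h₂ ⊢
    rw [hx.eq_of_le l hl] at h₁ ⊢
    exact Or.inl (le_antisymm h₂ h₁)

theorem inf_eq_of_switchesAt (hx : IsCoverSeq p q k x) (hw : w ∈ Icc p q)
    (h : SwitchesAt (¬ x · ≤ w) l) : x (l + 1) ⊓ w = x l :=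
  (hx.eq_or_eq ⟨le_inf (hx.mem _).1 hw.1, inf_le_left.trans (hx.mem _).2⟩
    (le_inf (hx.monotone l.le_succ) (not_not.1 h.1)) inf_le_left).resolve_right
    fun he => h.2 (he ▸ inf_le_right)

theorem monotone_inf (hx : IsCoverSeq p q k x) : Monotone (x · ⊓ v) :=
  fun _ _ h => inf_le_inf_right v (hx.monotone h)

theorem inf_mem (hx : IsCoverSeq p q k x) (hv : v ∈ Icc p q) (l : ℕ) : x l ⊓ v ∈ Icc p v :=
  ⟨le_inf (hx.mem l).1 hv.1, inf_le_right⟩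

theorem inf_eq_or_eq (hx : IsCoverSeq p q k x) (hv : v ∈ Icc p q)
    (hlm : ∀ l, LeftModularIn (Icc p q) (x l)) {t : α} (ht : t ∈ Icc p v)
    (h₁ : x l ⊓ v ≤ t) (h₂ : t ≤ x (l + 1) ⊓ v) : t = x l ⊓ v ∨ t = x (l + 1) ⊓ v := by
  have htS : t ∈ Icc p q := ⟨ht.1, ht.2.trans hv.2⟩
  rcases hx.eq_or_eq ⟨htS.1.trans le_sup_left, sup_le htS.2 (hx.mem l).2⟩ le_sup_right
    (sup_le (h₂.trans inf_le_left) (hx.monotone l.le_succ)) with h | h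
  · exact Or.inl (le_antisymm (le_inf (le_sup_left.trans h.le) ht.2) h₁)
  · right
    rw [← h, (hlm l).sup_inf_eq htS hv ht.2, sup_eq_left.2 h₁]

theorem covByIn_inf (hx : IsCoverSeq p q k x) (hv : v ∈ Icc p q)
    (hlm : ∀ l, LeftModularIn (Icc p q) (x l)) (hne : x l ⊓ v ≠ x (l + 1) ⊓ v) :
    CovByIn (Icc p v) (x l ⊓ v) (x (l + 1) ⊓ v) :=
  ⟨hx.inf_mem hv l, hx.inf_mem hv (l + 1), lt_of_le_of_ne (hx.monotone_inf l.le_succ) hne,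
    fun ⟨_, ht, h₁, h₂⟩ => (hx.inf_eq_or_eq hv hlm ht h₁.le h₂.le).elim h₁.ne' h₂.ne⟩

theorem leftModularIn_inf (hx : IsCoverSeq p q k x) (hv : v ∈ Icc p q)
    (hlm : ∀ l, LeftModularIn (Icc p q) (x l)) (l : ℕ) : LeftModularIn (Icc p v) (x l ⊓ v) := by
  refine ⟨hx.inf_mem hv l, fun y hy z hz hyz => le_antisymm ?_
    (le_inf (sup_le_sup_left inf_le_left y) (sup_le hyz.le inf_le_right))⟩
  calc (y ⊔ x l ⊓ v) ⊓ z ≤ (y ⊔ x l) ⊓ z := inf_le_inf_right z (sup_le_sup_left inf_le_left y)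
    _ = y ⊔ x l ⊓ z := (hlm l).2 y ⟨hy.1, hy.2.trans hv.2⟩ z ⟨hz.1, hz.2.trans hv.2⟩ hyz
    _ = y ⊔ x l ⊓ v ⊓ z := by rw [inf_assoc, inf_eq_right.2 hz.2]

end IsCoverSeq

theorem IsCoverChain.isCoverSeq {c : List α} (hc : IsCoverChain (Icc p q) c)
    (hp : c.head? = some p) (hq : c.getLast? = some q) :
    IsCoverSeq p q (c.length - 1) (c.getD · q) where
  zero := by simp [List.getD_eq_getElem?_getD, ← List.head?_eq_getElem?, hp]
  eq_of_le l hl := by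
    rcases hl.lt_or_eq with hl | rfl
    · simp [List.getD_eq_getElem?_getD, List.getElem?_eq_none (by omega : c.length ≤ l)]
    · simp [List.getD_eq_getElem?_getD, ← List.getLast?_eq_getElem?, hq]
  covByIn l hl := by
    simpa [List.getD_eq_getElem?_getD, List.getElem?_eq_getElem (by omega : l < c.length),
      List.getElem?_eq_getElem (by omega : l + 1 < c.length)] using
      List.isChain_iff_getElem.1 hc.1 l (by omega)

namespace IsCoverSeq

variable [Finite α]

theorem le_ncard_joinIrrIn (hx : IsCoverSeq p q k x) :
    k ≤ {j | JoinIrrIn (Icc p q) j}.ncard := by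
  simpa using ncard_le_ncard_joinIrrIn (L := (Finset.range k : Set ℕ)) hx.monotone hx.mem
    fun l hl => (hx.covByIn l (by simpa using hl)).2.2.1

theorem eq_of_joinIrrIn_switchesAt (hx : IsCoverSeq p q k x)
    (hJ : {j | JoinIrrIn (Icc p q) j}.ncard ≤ k) {j j' : α} (hj : JoinIrrIn (Icc p q) j)
    (hj' : JoinIrrIn (Icc p q) j') (h : SwitchesAt (j ≤ x ·) l) (h' : SwitchesAt (j' ≤ x ·) l) :
    j = j' :=
  SwitchesAt.eq_of_ncard_le (toFinite _) hJ (fun _ _ _ _ hab h => h.trans (hx.monotone hab))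
    (fun _ hj => ⟨by rw [hx.zero]; exact hj.left_lt.not_ge,
      by rw [hx.eq_of_le k le_rfl]; exact hj.1.2⟩)
    (fun l hl => exists_joinIrrIn_switchesAt hx.mem (hx.covByIn l hl).2.2.1) hj hj' h h'

theorem eq_of_meetIrrIn_switchesAt (hx : IsCoverSeq p q k x)
    (hM : {w | MeetIrrIn (Icc p q) w}.ncard ≤ k) {w w' : α} (hw : MeetIrrIn (Icc p q) w)
    (hw' : MeetIrrIn (Icc p q) w') (h : SwitchesAt (¬ x · ≤ w) l)
    (h' : SwitchesAt (¬ x · ≤ w') l) : w = w' :=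
  SwitchesAt.eq_of_ncard_le (Q := fun w l => ¬ x l ≤ w) (toFinite _) hM
    (fun _ _ _ _ hab h h' => h ((hx.monotone hab).trans h'))
    (fun _ hw => ⟨by rw [hx.zero, not_not]; exact hw.1.1,
      by rw [hx.eq_of_le k le_rfl]; exact hw.lt_right.not_ge⟩)
    (fun l hl => exists_meetIrrIn_switchesAt hx.mem (hx.covByIn l hl).2.2.1) hw hw' h h'

theorem exists_meetIrrIn_inf_eq (hx : IsCoverSeq p q k x) (hv : v ∈ Icc p q)
    (hlm : ∀ l, LeftModularIn (Icc p q) (x l)) (hz : MeetIrrIn (Icc p v) z)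
    (hi : SwitchesAt (¬ x · ⊓ v ≤ z) l) :
    ∃ w, MeetIrrIn (Icc p q) w ∧ SwitchesAt (¬ x · ≤ w) l ∧ w ⊓ v = z := by
  have hzS : z ∈ Icc p q := ⟨hz.1.1, hz.1.2.trans hv.2⟩
  have hxz : x l ⊓ v ≤ z := not_not.1 hi.1
  have hxl : ¬ x (l + 1) ≤ z ⊔ x l := fun h => hi.2 <|
    calc x (l + 1) ⊓ v ≤ (z ⊔ x l) ⊓ v := inf_le_inf_right v h
      _ = z ⊔ x l ⊓ v := (hlm l).sup_inf_eq hzS hv hz.1.2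
      _ = z := sup_eq_left.2 hxz
  obtain ⟨w, hw, hzw, hxw⟩ := exists_meetIrrIn_ge_not_ge (hx.mem (l + 1)).2
    ⟨hzS.1.trans le_sup_left, sup_le hzS.2 (hx.mem l).2⟩ hxl
  have hsw : SwitchesAt (¬ x · ≤ w) l := ⟨not_not.2 (le_sup_right.trans hzw), hxw⟩
  refine ⟨w, hw, hsw, ((le_inf (le_sup_left.trans hzw) hz.1.2).lt_or_eq.resolve_left
    fun hlt => ?_).symm⟩
  -- `y` lies strictly above `z`, yet left-modularity of `x (l + 1)` forces `y = z`
  set y := w ⊓ v ⊓ (z ⊔ x (l + 1) ⊓ v)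
  have hzy : z < y := hz.lt_inf ⟨hz.1.1.trans hlt.le, inf_le_right⟩
    ⟨hz.1.1.trans le_sup_left, sup_le hz.1.2 inf_le_right⟩ hlt (left_lt_sup.2 hi.2)
  have hyS : y ∈ Icc p q := ⟨hzS.1.trans hzy.le, inf_le_left.trans (inf_le_right.trans hv.2)⟩
  have hxy : x (l + 1) ⊓ y ≤ z :=
    calc x (l + 1) ⊓ y ≤ x (l + 1) ⊓ w ⊓ v :=
          le_inf (inf_le_inf_left _ (inf_le_left.trans inf_le_left))
            (inf_le_right.trans (inf_le_left.trans inf_le_right))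
      _ = x l ⊓ v := by rw [hx.inf_eq_of_switchesAt hw.1 hsw]
      _ ≤ z := hxz
  have hyz : y = z :=
    calc y = (z ⊔ x (l + 1)) ⊓ y :=
          (inf_eq_right.2 (inf_le_right.trans (sup_le_sup_left inf_le_left z))).symm
      _ = z ⊔ x (l + 1) ⊓ y := (hlm (l + 1)).2 z hzS y hyS hzy
      _ = z := sup_eq_left.2 hxy
  exact hzy.ne' hyz

theorem ncard_joinIrrIn_Icc_le [DecidableEq α] (hx : IsCoverSeq p q k x) (hv : v ∈ Icc p q)
    (hJ : {j | JoinIrrIn (Icc p q) j}.ncard ≤ k) :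
    {j | JoinIrrIn (Icc p v) j}.ncard ≤
      ((Finset.range k).filter fun l => x l ⊓ v ≠ x (l + 1) ⊓ v).card := by
  have hsw : ∀ j, JoinIrrIn (Icc p q) j →
      SwitchesAt (j ≤ x ·) (switchIdx (j ≤ x ·)) ∧ switchIdx (j ≤ x ·) < k := fun j hj =>
    switchesAt_switchIdx (by rw [hx.zero]; exact hj.left_lt.not_ge)
      (by rw [hx.eq_of_le k le_rfl]; exact hj.1.2)
  rw [← ncard_coe_finset]
  refine ncard_le_ncard_of_injOn (fun j => switchIdx (j ≤ x ·)) (fun j hj => ?_)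
    (fun j hj j' hj' h => ?_) (Finset.finite_toSet _)
  · obtain ⟨hjq, hjv⟩ := (joinIrrIn_Icc_iff hv.2).1 hj
    obtain ⟨hs, hlt⟩ := hsw j hjq
    rw [Finset.mem_coe, Finset.mem_filter, Finset.mem_range]
    exact ⟨hlt, fun he => hs.1 ((le_inf hs.2 hjv).trans (he.symm.le.trans inf_le_left))⟩
  · have hjq := ((joinIrrIn_Icc_iff hv.2).1 hj).1
    have hjq' := ((joinIrrIn_Icc_iff hv.2).1 hj').1
    exact hx.eq_of_joinIrrIn_switchesAt hJ hjq hjq' (hsw j hjq).1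
      ((congrArg _ h).mpr (hsw j' hjq').1)

theorem ncard_meetIrrIn_Icc_le [DecidableEq α] (hx : IsCoverSeq p q k x) (hv : v ∈ Icc p q)
    (hlm : ∀ l, LeftModularIn (Icc p q) (x l)) (hM : {w | MeetIrrIn (Icc p q) w}.ncard ≤ k) :
    {z | MeetIrrIn (Icc p v) z}.ncard ≤
      ((Finset.range k).filter fun l => x l ⊓ v ≠ x (l + 1) ⊓ v).card := by
  have hsw : ∀ z, MeetIrrIn (Icc p v) z → SwitchesAt (¬ x · ⊓ v ≤ z)
      (switchIdx (¬ x · ⊓ v ≤ z)) ∧ switchIdx (¬ x · ⊓ v ≤ z) < k := fun z hz =>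
    switchesAt_switchIdx (by rw [not_not, hx.zero, inf_eq_left.2 hv.1]; exact hz.1.1)
      (by rw [hx.eq_of_le k le_rfl, inf_eq_right.2 hv.2]; exact hz.lt_right.not_ge)
  rw [← ncard_coe_finset]
  refine ncard_le_ncard_of_injOn (fun z => switchIdx (¬ x · ⊓ v ≤ z)) (fun z hz => ?_)
    (fun z hz z' hz' h => ?_) (Finset.finite_toSet _)
  · obtain ⟨hs, hlt⟩ := hsw z hz
    rw [Finset.mem_coe, Finset.mem_filter, Finset.mem_range]
    exact ⟨hlt, fun he => hs.2 (he ▸ not_not.1 hs.1)⟩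
  · obtain ⟨w, hw, hws, rfl⟩ := hx.exists_meetIrrIn_inf_eq hv hlm hz (hsw z hz).1
    obtain ⟨w', hw', hws', rfl⟩ :=
      hx.exists_meetIrrIn_inf_eq hv hlm hz' ((congrArg _ h).mpr (hsw z' hz').1)
    rw [hx.eq_of_meetIrrIn_switchesAt hM hw hw' hws hws']

end IsCoverSeq

end CoverSeq

namespace IsTrimIn

variable {α : Type*} [Lattice α] {p q u v : α} {k : ℕ}

theorem exists_isCoverSeq (h : IsTrimIn (Icc p q) p q k) :
    ∃ x, IsCoverSeq p q k x ∧ ∀ l, LeftModularIn (Icc p q) (x l) := by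
  obtain ⟨⟨c, hc, hp, hq, hlen, hlm⟩, -⟩ := h
  refine ⟨(c.getD · q), ?_, fun l => hlm _ (List.getD_mem_of_getLast? hq l)⟩
  simpa [hlen] using hc.isCoverSeq hp hq

theorem exists_isTrimIn_Icc_of_le [Finite α] (h : IsTrimIn (Icc p q) p q k)
    (hv : v ∈ Icc p q) :
    ∃ m, IsTrimIn (Icc p v) p v m := by
  classical
  obtain ⟨x, hx, hlm⟩ := h.exists_isCoverSeq
  set s := (Finset.range k).filter fun l => x l ⊓ v ≠ x (l + 1) ⊓ v
  have hsteps : ∀ l ∈ (s : Set ℕ), x l ⊓ v < x (l + 1) ⊓ v := fun l hl =>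
    lt_of_le_of_ne (hx.monotone_inf l.le_succ) (Finset.mem_filter.1 hl).2
  have hJ : {j | JoinIrrIn (Icc p v) j}.ncard = s.card :=
    (hx.ncard_joinIrrIn_Icc_le hv h.2.2.1.le).antisymm <| by
      simpa using ncard_le_ncard_joinIrrIn hx.monotone_inf (hx.inf_mem hv) hsteps
  have hM : {z | MeetIrrIn (Icc p v) z}.ncard = s.card :=
    (hx.ncard_meetIrrIn_Icc_le hv hlm h.2.2.2.le).antisymm <| by
      simpa using ncard_le_ncard_meetIrrIn hx.monotone_inf (hx.inf_mem hv) hsteps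
  refine ⟨s.card, ⟨destutterSeq (x · ⊓ v) k, ⟨?_, ?_⟩, ?_, ?_, length_destutterSeq _, ?_⟩,
    fun c hc hcp hcv => ?_, hJ, hM⟩
  · exact isChain_destutterSeq _ fun l _ => hx.covByIn_inf hv hlm
  · intro y hy
    obtain ⟨l, -, rfl⟩ := exists_eq_of_mem_destutterSeq _ hy
    exact hx.inf_mem hv l
  · rw [head?_destutterSeq, hx.zero, inf_eq_left.2 hv.1]
  · rw [getLast?_destutterSeq, hx.eq_of_le k le_rfl, inf_eq_right.2 hv.2]
  · intro y hy
    obtain ⟨l, -, rfl⟩ := exists_eq_of_mem_destutterSeq _ hy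
    exact hx.leftModularIn_inf hv hlm l
  · have := (hc.isCoverSeq hcp hcv).le_ncard_joinIrrIn
    omega

theorem exists_isTrimIn_Icc_of_ge [Finite α] (h : IsTrimIn (Icc p q) p q k)
    (hu : u ∈ Icc p q) :
    ∃ m, IsTrimIn (Icc u q) u q m := by
  have hd : IsTrimIn (Icc (toDual q) (toDual p)) (toDual q) (toDual p) k := by
    rw [Icc_toDual]
    exact h.dual
  obtain ⟨m, hm⟩ := hd.exists_isTrimIn_Icc_of_le (v := toDual u) ⟨hu.2, hu.1⟩
  rw [Icc_toDual] at hm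
  exact ⟨m, hm.of_dual⟩

end IsTrimIn

/-- Every closed interval of a trim lattice is trim. -/
theorem stmt_5 {α : Type*} [Lattice α] [Fintype α] [BoundedOrder α] (k : ℕ)
    (htrim : IsTrimIn (Set.univ : Set α) ⊥ ⊤ k) (u v : α) (huv : u ≤ v) :
    ∃ m : ℕ, IsTrimIn (Set.Icc u v) u v m := by
  rw [← Icc_bot_top] at htrim
  obtain ⟨m, hm⟩ := htrim.exists_isTrimIn_Icc_of_le (v := v) ⟨bot_le, le_top⟩
  exact hm.exists_isTrimIn_Icc_of_ge ⟨bot_le, huv⟩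
end
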